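/- arXiv:0912.1186 — 3 statements merged into one kernel-verified Lean document; each statement's English description precedes it below -/
import Mathlib

section
/- Let a be a finite complex measure on ℝ with total mass a(ℝ) = 0 and with finite first moment ∫ |τ| d‖a‖(τ) < ∞, where ‖a‖ is the total variation measure. Then the function F(s) = a((−∞, s]) is integrable on ℝ, and ∫ |F(s)| ds ≤ ∫ |τ| d‖a‖(τ). -/
/-!
Both `F s = ∫_{(-∞, s]} f dμ` and, since the total mass vanishes, `-F s = ∫_{(s, ∞)} f dμ` are
bounded by the total variation `ν = ‖f‖ μ` of the corresponding half-line. Integrating the first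
bound over `s ≤ 0` and the second over `s > 0`, Tonelli turns `∫ ν((-∞, s]) ds` and
`∫ ν((s, ∞)) ds` into `∫ τ⁻ dν` and `∫ τ⁺ dν`, whose sum is the first moment `∫ |τ| dν`.
-/

open MeasureTheory Filter Set
open scoped ENNReal

theorem ENNReal.ofReal_sub_add_ofReal_sub (a b : ℝ) :
    ENNReal.ofReal (a - b) + ENNReal.ofReal (b - a) = ENNReal.ofReal |a - b| := by
  rcases le_total a b with h | h
  · rw [ENNReal.ofReal_of_nonpos (sub_nonpos.2 h), zero_add, abs_sub_comm,
      abs_of_nonneg (sub_nonneg.2 h)]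
  · rw [ENNReal.ofReal_of_nonpos (sub_nonpos.2 h), add_zero, abs_of_nonneg (sub_nonneg.2 h)]

namespace MeasureTheory

theorem lintegral_Iic_measure_Iic (ν : Measure ℝ) [SFinite ν] (c : ℝ) :
    ∫⁻ s in Iic c, ν (Iic s) = ∫⁻ τ, ENNReal.ofReal (c - τ) ∂ν := by
  have hS : MeasurableSet {p : ℝ × ℝ | p.2 ≤ p.1} := measurableSet_le measurable_snd measurable_fst
  calc ∫⁻ s in Iic c, ν (Iic s) = (volume.restrict (Iic c)).prod ν {p | p.2 ≤ p.1} :=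
        (Measure.prod_apply hS).symm
    _ = ∫⁻ τ, ENNReal.ofReal (c - τ) ∂ν := by
        rw [Measure.prod_apply_symm hS]
        refine lintegral_congr fun τ => ?_
        rw [show (fun s => (s, τ)) ⁻¹' {p : ℝ × ℝ | p.2 ≤ p.1} = Ici τ from rfl,
          Measure.restrict_apply measurableSet_Ici, Ici_inter_Iic, Real.volume_Icc]

theorem lintegral_Ioi_measure_Ioi (ν : Measure ℝ) [SFinite ν] (c : ℝ) :
    ∫⁻ s in Ioi c, ν (Ioi s) = ∫⁻ τ, ENNReal.ofReal (τ - c) ∂ν := by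
  have hS : MeasurableSet {p : ℝ × ℝ | p.1 < p.2} := measurableSet_lt measurable_fst measurable_snd
  calc ∫⁻ s in Ioi c, ν (Ioi s) = (volume.restrict (Ioi c)).prod ν {p | p.1 < p.2} :=
        (Measure.prod_apply hS).symm
    _ = ∫⁻ τ, ENNReal.ofReal (τ - c) ∂ν := by
        rw [Measure.prod_apply_symm hS]
        refine lintegral_congr fun τ => ?_
        rw [show (fun s => (s, τ)) ⁻¹' {p : ℝ × ℝ | p.1 < p.2} = Iio τ from rfl,
          Measure.restrict_apply measurableSet_Iio, Iio_inter_Ioi, Real.volume_Ioo]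

variable {E : Type*} [NormedAddCommGroup E] [NormedSpace ℝ E]

theorem aestronglyMeasurable_setIntegral_Iic_of_sFinite {μ : Measure ℝ} [SFinite μ]
    (ν : Measure ℝ) {f : ℝ → E} (hf : AEStronglyMeasurable f μ) :
    AEStronglyMeasurable (fun s => ∫ τ in Iic s, f τ ∂μ) ν := by
  have hprod : AEStronglyMeasurable
      (fun p : ℝ × ℝ => {p : ℝ × ℝ | p.2 ≤ p.1}.indicator (fun p => f p.2) p) (ν.prod μ) :=
    hf.comp_snd.indicator (measurableSet_le measurable_snd measurable_fst)
  refine hprod.integral_prod_right'.congr (Eventually.of_forall fun s => ?_)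
  simp only [← integral_indicator measurableSet_Iic]
  rfl

theorem setIntegral_Iic_restrict_sigmaFiniteSet {μ : Measure ℝ} {f : ℝ → E}
    (hf : AEFinStronglyMeasurable f μ) (s : ℝ) :
    ∫ τ in Iic s, f τ ∂μ.restrict hf.sigmaFiniteSet = ∫ τ in Iic s, f τ ∂μ := by
  rw [← Measure.restrict_comm hf.measurableSet]
  refine setIntegral_eq_integral_of_ae_compl_eq_zero (ae_restrict_of_ae ?_)
  exact (ae_restrict_iff' hf.measurableSet.compl).1 hf.ae_eq_zero_compl

/-- `μ` need not be s-finite, but an integrable `f` lives on a set where it is σ-finite, and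
restricting to that set makes the Fubini argument above available. -/
theorem aestronglyMeasurable_setIntegral_Iic {μ : Measure ℝ} (ν : Measure ℝ) {f : ℝ → E}
    (hf : Integrable f μ) :
    AEStronglyMeasurable (fun s => ∫ τ in Iic s, f τ ∂μ) ν := by
  have hfin := hf.aefinStronglyMeasurable
  simp_rw [← setIntegral_Iic_restrict_sigmaFiniteSet hfin]
  exact aestronglyMeasurable_setIntegral_Iic_of_sFinite ν hf.1.restrict

theorem lintegral_enorm_setIntegral_Iic_le {μ : Measure ℝ} {f : ℝ → E} (hf : Integrable f μ)
    (hmass : ∫ τ, f τ ∂μ = 0) (c : ℝ) :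
    ∫⁻ s, ‖∫ τ in Iic s, f τ ∂μ‖ₑ ≤ ∫⁻ τ, ENNReal.ofReal (|τ - c| * ‖f τ‖) ∂μ := by
  set ν := μ.withDensity fun τ => ‖f τ‖ₑ
  have : IsFiniteMeasure ν := isFiniteMeasure_withDensity hf.2.ne
  have hIic (s : ℝ) : ‖∫ τ in Iic s, f τ ∂μ‖ₑ ≤ ν (Iic s) := by
    rw [withDensity_apply _ measurableSet_Iic]
    exact enorm_integral_le_lintegral_enorm _
  have hIoi (s : ℝ) : ‖∫ τ in Iic s, f τ ∂μ‖ₑ ≤ ν (Ioi s) := by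
    have hsplit := integral_add_compl (measurableSet_Iic (a := s)) hf
    rw [compl_Iic, hmass, add_eq_zero_iff_eq_neg] at hsplit
    rw [withDensity_apply _ measurableSet_Ioi, hsplit, enorm_neg]
    exact enorm_integral_le_lintegral_enorm _
  calc ∫⁻ s, ‖∫ τ in Iic s, f τ ∂μ‖ₑ
      = (∫⁻ s in Iic c, ‖∫ τ in Iic s, f τ ∂μ‖ₑ) + ∫⁻ s in Ioi c, ‖∫ τ in Iic s, f τ ∂μ‖ₑ := by
        rw [← lintegral_add_compl _ measurableSet_Iic, compl_Iic]
    _ ≤ (∫⁻ s in Iic c, ν (Iic s)) + ∫⁻ s in Ioi c, ν (Ioi s) :=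
        add_le_add (lintegral_mono hIic) (lintegral_mono hIoi)
    _ = ∫⁻ τ, ENNReal.ofReal |τ - c| ∂ν := by
        rw [lintegral_Iic_measure_Iic, lintegral_Ioi_measure_Ioi,
          ← lintegral_add_left (by fun_prop : Measurable fun τ : ℝ => ENNReal.ofReal (c - τ))]
        simp_rw [ENNReal.ofReal_sub_add_ofReal_sub, abs_sub_comm c]
    _ = ∫⁻ τ, ENNReal.ofReal (|τ - c| * ‖f τ‖) ∂μ := by
        rw [lintegral_withDensity_eq_lintegral_mul₀ hf.1.enorm
          (by fun_prop : AEMeasurable (fun τ : ℝ => ENNReal.ofReal |τ - c|) μ)]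
        refine lintegral_congr fun τ => ?_
        rw [Pi.mul_apply, ENNReal.ofReal_mul (abs_nonneg _), ofReal_norm, mul_comm]

end MeasureTheory

/-- Let `a = f dμ` be a finite complex measure on `ℝ` with total mass
`0` and finite first moment `∫ |τ| d‖a‖(τ) = ∫ |τ|·‖f τ‖ dμ < ∞`. Then the
cumulative distribution function `F(s) = a((−∞, s])` is integrable on `ℝ` and
`∫ |F| ≤ ∫ |τ| d‖a‖(τ)`. -/
theorem stmt_7 (μ : Measure ℝ) (f : ℝ → ℂ) (hf : Integrable f μ)
    (hmass : ∫ τ, f τ ∂μ = 0)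
    (hmom : Integrable (fun τ => |τ| * ‖f τ‖) μ) :
    Integrable (fun s => ∫ τ in Set.Iic s, f τ ∂μ) ∧
    (∫ s : ℝ, ‖∫ τ in Set.Iic s, f τ ∂μ‖) ≤ ∫ τ, |τ| * ‖f τ‖ ∂μ := by
  have hbound := lintegral_enorm_setIntegral_Iic_le hf hmass 0
  simp only [sub_zero] at hbound
  rw [← ofReal_integral_eq_lintegral_ofReal hmom (Eventually.of_forall fun τ => by positivity)]
    at hbound
  have hmeas := aestronglyMeasurable_setIntegral_Iic volume hf
  refine ⟨⟨hmeas, hbound.trans_lt ENNReal.ofReal_lt_top⟩, ?_⟩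
  rw [integral_norm_eq_lintegral_enorm hmeas]
  exact ENNReal.toReal_le_of_le_ofReal (integral_nonneg fun τ => by positivity) hbound
end

section
/- Let a be a finite complex measure on ℝ with total mass a(ℝ) = 0 and with finite first moment ∫ |τ| d‖a‖(τ) < ∞, where ‖a‖ is the total variation measure. Let â(λ) = ∫ e^{−iλτ} da(τ) be its Fourier transform. Then there exists an integrable function g ∈ L¹(ℝ, ℂ) whose Fourier transform ĝ(λ) = ∫ e^{−iλτ} g(τ) dτ satisfies ĝ(λ) = â(λ)² / λ for every λ ≠ 0. -/
/-! Write `a = f μ` and `k(t, ·) = 1_{(0,t]} - 1_{(t,0]}`, so that `∫ h k(t, ·) = ∫_0^t h`.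
The function `G(s) = ∫∫ k(x + y, s) da(x) da(y)`, a primitive of `-(a * a)`, is integrable as
`∫ |k(t, ·)| = |t| ≤ |x| + |y|` and `a` has a first moment, and by Fubini
`Ĝ(λ) = ∫∫ (e^{-iλ(x+y)} - 1) / (-iλ) da(x) da(y) = (â(λ)² - a(ℝ)²) / (-iλ)`.
Since `a(ℝ) = 0`, `g = -i G` works. Fubini needs `μ` to be s-finite, which costs nothing:
`f` vanishes off a set on which `μ` is σ-finite. -/

open MeasureTheory Filter Topology Set

/-- Fourier transform `μ̂(λ) = ∫ e^{−iλτ} f(τ) dμ(τ)` of the finite complex measure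
represented by the integrable density `f` with respect to `μ`. -/
noncomputable def mFT (μ : MeasureTheory.Measure ℝ) (f : ℝ → ℂ) (l : ℝ) : ℂ :=
  ∫ τ, Complex.exp (-(Complex.I * (l : ℂ) * (τ : ℂ))) * f τ ∂μ

open Complex

noncomputable def fourierExp (l τ : ℝ) : ℂ := cexp (-(I * l * τ))

lemma norm_fourierExp (l τ : ℝ) : ‖fourierExp l τ‖ = 1 := by
  simp [fourierExp, Complex.norm_exp]

@[fun_prop]
lemma continuous_fourierExp (l : ℝ) : Continuous (fourierExp l) := by
  unfold fourierExp; fun_prop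

lemma fourierExp_add (l x y : ℝ) : fourierExp l (x + y) = fourierExp l x * fourierExp l y := by
  simp only [fourierExp, ← Complex.exp_add]
  push_cast
  ring_nf

lemma intervalIntegral_fourierExp {l : ℝ} (hl : l ≠ 0) (t : ℝ) :
    ∫ s in (0 : ℝ)..t, fourierExp l s = (fourierExp l t - 1) / (-(I * l)) := by
  have hc : -(I * l) ≠ 0 := by simp [hl]
  have hexp : fourierExp l = fun s : ℝ => cexp (-(I * l) * s) := by
    ext s; simp [fourierExp, neg_mul]
  rw [hexp, integral_exp_mul_complex hc]
  simp

lemma MeasureTheory.Integrable.fourierExp_mul {μ : Measure ℝ} {f : ℝ → ℂ} (hf : Integrable f μ)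
    (l : ℝ) : Integrable (fun τ => fourierExp l τ * f τ) μ :=
  hf.bdd_mul (continuous_fourierExp l).aestronglyMeasurable
    (ae_of_all _ fun τ => (norm_fourierExp l τ).le)

noncomputable def intervalKernel (t s : ℝ) : ℂ :=
  (Ioc 0 t).indicator (fun _ => 1) s - (Ioc t 0).indicator (fun _ => 1) s

lemma measurable_intervalKernel : Measurable (Function.uncurry intervalKernel) := by
  have hpos : MeasurableSet {q : ℝ × ℝ | q.2 ∈ Ioc 0 q.1} :=
    (measurableSet_lt measurable_const measurable_snd).inter
      (measurableSet_le measurable_snd measurable_fst)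
  have hneg : MeasurableSet {q : ℝ × ℝ | q.2 ∈ Ioc q.1 0} :=
    (measurableSet_lt measurable_fst measurable_snd).inter
      (measurableSet_le measurable_snd measurable_const)
  convert ((measurable_const (a := (1 : ℂ))).indicator hpos).sub
    ((measurable_const (a := (1 : ℂ))).indicator hneg) using 1
  ext ⟨t, s⟩
  simp [intervalKernel, indicator_apply]

lemma norm_intervalKernel (t s : ℝ) :
    ‖intervalKernel t s‖ = (uIoc 0 t).indicator (fun _ => 1) s := by
  rcases le_total 0 t with ht | ht
  · simp [intervalKernel, uIoc_of_le ht, Ioc_eq_empty_of_le ht, norm_indicator_eq_indicator_norm]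
  · simp [intervalKernel, uIoc_of_ge ht, Ioc_eq_empty_of_le ht, norm_indicator_eq_indicator_norm]

lemma integrable_intervalKernel (t : ℝ) : Integrable (intervalKernel t) := by
  refine (Integrable.sub ?_ ?_) <;>
    exact (integrable_indicator_iff measurableSet_Ioc).2 (integrableOn_const measure_Ioc_lt_top.ne)

lemma integral_norm_intervalKernel (t : ℝ) : ∫ s, ‖intervalKernel t s‖ = |t| := by
  simp_rw [norm_intervalKernel]
  rw [integral_indicator_const _ measurableSet_uIoc]
  simp [Measure.real, Real.volume_uIoc]

lemma integral_mul_intervalKernel {h : ℝ → ℂ} {t : ℝ} (hh : IntervalIntegrable h volume 0 t) :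
    ∫ s, h s * intervalKernel t s = ∫ s in (0 : ℝ)..t, h s := by
  have hsplit : (fun s => h s * intervalKernel t s) =
      fun s => (Ioc 0 t).indicator h s - (Ioc t 0).indicator h s := by
    ext s
    simp only [intervalKernel, indicator_apply]
    split_ifs <;> ring
  rw [hsplit, integral_sub ((integrable_indicator_iff measurableSet_Ioc).2 hh.1)
    ((integrable_indicator_iff measurableSet_Ioc).2 hh.2), integral_indicator measurableSet_Ioc,
    integral_indicator measurableSet_Ioc, intervalIntegral]

section

variable {μ : Measure ℝ} {f : ℝ → ℂ}

noncomputable def convPrimitive (μ : Measure ℝ) (f : ℝ → ℂ) (s : ℝ) : ℂ :=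
  ∫ p, f p.1 * f p.2 * intervalKernel (p.1 + p.2) s ∂μ.prod μ

lemma integrable_convKernel (hf : Integrable f μ)
    (hmom : Integrable (fun τ => |τ| * ‖f τ‖) μ) :
    Integrable (fun z : (ℝ × ℝ) × ℝ => f z.1.1 * f z.1.2 * intervalKernel (z.1.1 + z.1.2) z.2)
      ((μ.prod μ).prod volume) := by
  have hmeas : AEStronglyMeasurable (fun z : (ℝ × ℝ) × ℝ =>
      f z.1.1 * f z.1.2 * intervalKernel (z.1.1 + z.1.2) z.2) ((μ.prod μ).prod volume) :=
    (hf.1.comp_fst.mul hf.1.comp_snd).comp_fst.mul <|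
      (measurable_intervalKernel.comp ((measurable_fst.fst.add measurable_fst.snd).prodMk
        measurable_snd)).aestronglyMeasurable
  refine (integrable_prod_iff hmeas).2
    ⟨ae_of_all _ fun p => (integrable_intervalKernel (p.1 + p.2)).const_mul (f p.1 * f p.2), ?_⟩
  have hnorm : ∀ p : ℝ × ℝ, ∫ s, ‖f p.1 * f p.2 * intervalKernel (p.1 + p.2) s‖ =
      ‖f p.1‖ * ‖f p.2‖ * |p.1 + p.2| := fun p => by
    simp_rw [norm_mul (f p.1 * f p.2)]
    rw [integral_const_mul, integral_norm_intervalKernel, norm_mul]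
  simp_rw [hnorm]
  refine ((hmom.mul_prod hf.norm).add (hf.norm.mul_prod hmom)).mono'
    ((hf.1.norm.comp_fst.mul hf.1.norm.comp_snd).mul
      (continuous_abs.comp (by fun_prop)).aestronglyMeasurable) (ae_of_all _ fun p => ?_)
  rw [Real.norm_of_nonneg (by positivity)]
  calc ‖f p.1‖ * ‖f p.2‖ * |p.1 + p.2| ≤ ‖f p.1‖ * ‖f p.2‖ * (|p.1| + |p.2|) := by
        gcongr; exact abs_add_le _ _
    _ = _ := by simp only [Pi.add_apply]; ring

lemma integrable_convPrimitive [SFinite μ] (hf : Integrable f μ)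
    (hmom : Integrable (fun τ => |τ| * ‖f τ‖) μ) : Integrable (convPrimitive μ f) :=
  (integrable_convKernel hf hmom).integral_prod_right

lemma integral_fourierExp_mul_convPrimitive [SFinite μ] (hf : Integrable f μ)
    (hmom : Integrable (fun τ => |τ| * ‖f τ‖) μ) {l : ℝ} (hl : l ≠ 0) :
    ∫ s, fourierExp l s * convPrimitive μ f s =
      (mFT μ f l ^ 2 - (∫ τ, f τ ∂μ) ^ 2) / (-(I * l)) := by
  have hint := (integrable_convKernel hf hmom).bdd_mul
    ((continuous_fourierExp l).comp continuous_snd).aestronglyMeasurable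
    (ae_of_all _ fun z => (norm_fourierExp l z.2).le)
  calc ∫ s, fourierExp l s * convPrimitive μ f s
      = ∫ s, ∫ p, fourierExp l s * (f p.1 * f p.2 * intervalKernel (p.1 + p.2) s) ∂μ.prod μ := by
        simp_rw [convPrimitive, ← integral_const_mul]
    _ = ∫ p, (∫ s, fourierExp l s * (f p.1 * f p.2 * intervalKernel (p.1 + p.2) s)) ∂μ.prod μ :=
        (integral_integral_swap hint).symm
    _ = ∫ p, ((fourierExp l p.1 * f p.1) * (fourierExp l p.2 * f p.2) * (-(I * l))⁻¹ -
          f p.1 * f p.2 * (-(I * l))⁻¹) ∂μ.prod μ := by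
        congr 1; ext p
        simp_rw [mul_left_comm (fourierExp l _)]
        rw [integral_const_mul, integral_mul_intervalKernel
          ((continuous_fourierExp l).intervalIntegrable _ _), intervalIntegral_fourierExp hl,
          fourierExp_add]
        ring
    _ = (mFT μ f l ^ 2 - (∫ τ, f τ ∂μ) ^ 2) / (-(I * l)) := by
        rw [integral_sub (((hf.fourierExp_mul l).mul_prod (hf.fourierExp_mul l)).mul_const _)
          ((hf.mul_prod hf).mul_const _), integral_mul_const, integral_mul_const,
          integral_prod_mul (fun τ => fourierExp l τ * f τ) (fun τ => fourierExp l τ * f τ),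
          integral_prod_mul]
        simp only [mFT, fourierExp]
        ring

theorem exists_integrable_fourier_eq_sq_div [SFinite μ] (hf : Integrable f μ)
    (hmass : ∫ τ, f τ ∂μ = 0) (hmom : Integrable (fun τ => |τ| * ‖f τ‖) μ) :
    ∃ g : ℝ → ℂ, Integrable g ∧
      ∀ l : ℝ, l ≠ 0 → ∫ τ, fourierExp l τ * g τ = mFT μ f l ^ 2 / l := by
  refine ⟨fun s => -I * convPrimitive μ f s,
    (integrable_convPrimitive hf hmom).const_mul _, fun l hl => ?_⟩
  simp_rw [mul_left_comm (fourierExp l _)]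
  rw [integral_const_mul, integral_fourierExp_mul_convPrimitive hf hmom hl, hmass]
  have : (l : ℂ) ≠ 0 := by exact_mod_cast hl
  field_simp
  ring

end

lemma setIntegral_mul_eq_integral_of_ae_compl_eq_zero {α : Type*} [MeasurableSpace α]
    {μ : Measure α} {S : Set α} {f : α → ℂ} (hS : MeasurableSet S) (hfS : f =ᵐ[μ.restrict Sᶜ] 0)
    (h : α → ℂ) : ∫ x in S, h x * f x ∂μ = ∫ x, h x * f x ∂μ :=
  setIntegral_eq_integral_of_ae_compl_eq_zero <|
    ((ae_restrict_iff' hS.compl).1 hfS).mono fun x hx hxS => by simp [hx hxS]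

/-- Let `a = f dμ` be a finite complex measure on `ℝ` with total mass
`0` and finite first moment, and let `â` be its Fourier transform. Then there is an
integrable `g ∈ L¹(ℝ, ℂ)` whose Fourier transform equals `â(λ)²/λ` for all `λ ≠ 0`. -/
theorem stmt_8 (μ : Measure ℝ) (f : ℝ → ℂ) (hf : Integrable f μ)
    (hmass : ∫ τ, f τ ∂μ = 0)
    (hmom : Integrable (fun τ => |τ| * ‖f τ‖) μ) :
    ∃ g : ℝ → ℂ, Integrable g ∧
      ∀ l : ℝ, l ≠ 0 →
        (∫ τ : ℝ, Complex.exp (-(Complex.I * (l : ℂ) * (τ : ℂ))) * g τ)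
          = (mFT μ f l) ^ 2 / (l : ℂ) := by
  obtain ⟨S, hS, hfS, _⟩ := hf.aefinStronglyMeasurable.exists_set_sigmaFinite
  have hrestrict := setIntegral_mul_eq_integral_of_ae_compl_eq_zero hS hfS
  have hmassS : ∫ τ in S, f τ ∂μ = 0 := by simpa [hmass] using hrestrict 1
  obtain ⟨g, hg, hfourier⟩ :=
    exists_integrable_fourier_eq_sq_div hf.restrict hmassS hmom.restrict
  refine ⟨g, hg, fun l hl => ?_⟩
  rw [show mFT μ f l = mFT (μ.restrict S) f l from (hrestrict _).symm]
  exact hfourier l hl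
end

section
/- Let φ : ℝ → ℂ be a bounded uniformly continuous function and ⋆ ∈ {+, −}. Suppose sing supp^⋆(φ̂) = ∅, i.e. for every λ ∈ ℝ there exists an open interval I containing λ such that for every finite complex measure μ on ℝ whose Fourier transform μ̂ is supported in I, the convolution μ * φ tends to 0 at ⋆∞. Then φ(t) → 0 as t → ⋆∞. -/
open MeasureTheory Filter Topology Set

/-- Convolution `(μ * φ)(t) = ∫ φ(t − τ) f(τ) dμ(τ)` of the finite complex measure
`f dμ` with a function `φ`. -/
noncomputable def mconv (μ : MeasureTheory.Measure ℝ) (f : ℝ → ℂ) (φ : ℝ → ℂ)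
    (t : ℝ) : ℂ :=
  ∫ τ, φ (t - τ) * f τ ∂μ

/-- `x ∉ sing supp^⋆(φ̂)` (where `⋆∞` is encoded by the filter `l`, `atTop` or
`atBot`): there is an open interval `I ∋ x` such that for every finite complex
measure `g dν` with Fourier transform supported in `I`, the convolution with `φ`
tends to `0` along `l`. -/
def NotSingAt (l : Filter ℝ) (φ : ℝ → ℂ) (x : ℝ) : Prop :=
  ∃ c d : ℝ, x ∈ Set.Ioo c d ∧
    ∀ (ν : MeasureTheory.Measure ℝ) (g : ℝ → ℂ), MeasureTheory.Integrable g ν →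
      tsupport (mFT ν g) ⊆ Set.Ioo c d →
      Filter.Tendsto (mconv ν g φ) l (nhds 0)

/-! Fix a Schwartz function `S` with compact support and `S 0 = 1`, and let `k = 𝓕⁻ S`. The
dilates `k_N τ = N k (N τ)` form an approximate identity, so `k_N * φ → φ` uniformly because `φ`
is bounded and uniformly continuous. Each `𝓕 k_N = S (· / N)` is smooth with compact support; a
smooth partition of unity subordinate to the intervals supplied by the hypothesis splits `k_N`
into finitely many pieces whose Fourier transforms are each supported in one such interval, so
`k_N * φ → 0` at `⋆∞`. Interchanging the two limits gives `φ → 0`. -/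

open FourierTransform Real
open scoped ContDiff Manifold SchwartzMap

theorem exists_sum_eq_of_tsupport_subset_iUnion {ι E F : Type*} [Fintype ι]
    [NormedAddCommGroup E] [NormedSpace ℝ E] [FiniteDimensional ℝ E]
    [NormedAddCommGroup F] [NormedSpace ℝ F]
    {f : E → F} (hf : ContDiff ℝ ∞ f) (hfs : HasCompactSupport f)
    {U : ι → Set E} (hU : ∀ i, IsOpen (U i)) (hfU : tsupport f ⊆ ⋃ i, U i) :
    ∃ f' : ι → E → F, (∀ i, ContDiff ℝ ∞ (f' i)) ∧ (∀ i, HasCompactSupport (f' i)) ∧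
      (∀ i, tsupport (f' i) ⊆ U i) ∧ f = ∑ i, f' i := by
  obtain ⟨ρ, hρ⟩ := SmoothPartitionOfUnity.exists_isSubordinate 𝓘(ℝ, E) (isClosed_tsupport f)
    U hU hfU
  refine ⟨fun i x => ρ i x • f x, fun i => ?_, fun i => hfs.smul_left,
    fun i => (tsupport_smul_subset_left _ _).trans (hρ i), ?_⟩
  · exact (contMDiff_iff_contDiff.1 (ρ i).contMDiff).smul hf
  · ext x
    rw [Finset.sum_apply, ← Finset.sum_smul]
    by_cases hx : x ∈ tsupport f
    · rw [← finsum_eq_sum_of_fintype, ρ.sum_eq_one hx, one_smul]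
    · rw [image_eq_zero_of_notMem_tsupport hx, smul_zero]

theorem exists_schwartzMap_hasCompactSupport_apply_eq_one {E : Type*} [NormedAddCommGroup E]
    [NormedSpace ℝ E] [FiniteDimensional ℝ E] (x : E) :
    ∃ S : 𝓢(E, ℂ), HasCompactSupport S ∧ S x = 1 := by
  let b : ContDiffBump x := ⟨1, 2, one_pos, one_lt_two⟩
  have hb : HasCompactSupport fun y => (b y : ℂ) :=
    b.hasCompactSupport.comp_left Complex.ofReal_zero
  refine ⟨hb.toSchwartzMap (Complex.ofRealCLM.contDiff.comp b.contDiff), hb, ?_⟩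
  show (b x : ℂ) = 1
  simp [b.one_of_mem_closedBall (Metric.mem_closedBall_self zero_le_one)]

theorem tendsto_setIntegral_le_abs_atTop {E : Type*} [NormedAddCommGroup E] [NormedSpace ℝ E]
    {f : ℝ → E} (hf : Integrable f) :
    Tendsto (fun R => ∫ u in {u | R ≤ |u|}, f u) atTop (𝓝 0) := by
  have hT : ∀ R : ℝ, MeasurableSet {u : ℝ | R ≤ |u|} := fun R =>
    measurableSet_le measurable_const continuous_abs.measurable
  simp_rw [← integral_indicator (hT _)]
  rw [← integral_zero ℝ E]
  refine tendsto_integral_filter_of_dominated_convergence (‖f ·‖)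
    (Eventually.of_forall fun R => hf.aestronglyMeasurable.indicator (hT R))
    (Eventually.of_forall fun R => ae_of_all _ fun u => norm_indicator_le_norm_self _ _)
    hf.norm (ae_of_all _ fun u => tendsto_const_nhds.congr' ?_)
  filter_upwards [eventually_gt_atTop |u|] with R hR
  exact (indicator_of_notMem (s := {u : ℝ | R ≤ |u|}) (not_le.2 hR) f).symm

theorem mconv_finsetSum {ι : Type*} (s : Finset ι) {μ : Measure ℝ} {g : ι → ℝ → ℂ}
    (hg : ∀ i ∈ s, Integrable (g i) μ) {φ : ℝ → ℂ} (hφ : Continuous φ) {C : ℝ}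
    (hC : ∀ t, ‖φ t‖ ≤ C) :
    mconv μ (∑ i ∈ s, g i) φ = ∑ i ∈ s, mconv μ (g i) φ := by
  ext t
  simp only [mconv, Finset.sum_apply, Finset.mul_sum]
  exact integral_finsetSum s fun i hi =>
    (hg i hi).bdd_mul (by fun_prop : Continuous fun τ => φ (t - τ)).aestronglyMeasurable
      (ae_of_all _ fun τ => hC _)

theorem mFT_volume_eq_fourier (g : ℝ → ℂ) : mFT volume g = fun l => 𝓕 g ((2 * π)⁻¹ * l) := by
  ext l
  rw [mFT, Real.fourier_real_eq_integral_exp_smul]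
  congr 1
  ext τ
  rw [smul_eq_mul]
  congr 2
  push_cast
  field_simp

theorem tsupport_mFT_volume (g : ℝ → ℂ) :
    tsupport (mFT volume g) = (fun l => (2 * π)⁻¹ * l) ⁻¹' tsupport (𝓕 g) := by
  rw [mFT_volume_eq_fourier]
  exact tsupport_comp_eq_preimage _ (Homeomorph.mulLeft₀ _ (by positivity))

theorem tendsto_mconv_of_hasCompactSupport_fourier {l : Filter ℝ} {φ : ℝ → ℂ}
    (hφ : Continuous φ) {C : ℝ} (hC : ∀ t, ‖φ t‖ ≤ C) (hsing : ∀ x, NotSingAt l φ x)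
    {g : ℝ → ℂ} (hg : Integrable g) (hgc : Continuous g) (hĝ : ContDiff ℝ ∞ (𝓕 g))
    (hĝs : HasCompactSupport (𝓕 g)) :
    Tendsto (mconv volume g φ) l (𝓝 0) := by
  choose c d hcd hconv using hsing
  set U : ℝ → Set ℝ := fun x => (fun ξ => 2 * π * ξ) ⁻¹' Ioo (c x) (d x)
  have hUo : ∀ x, IsOpen (U x) := fun x => isOpen_Ioo.preimage (by fun_prop)
  obtain ⟨t, ht⟩ := hĝs.isCompact.elim_finite_subcover U hUo
    fun ξ _ => mem_iUnion.2 ⟨2 * π * ξ, hcd _⟩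
  rw [← iUnion_subtype (· ∈ t) fun i => U i] at ht
  obtain ⟨ψ, hψ, hψs, hψU, hsum⟩ := exists_sum_eq_of_tsupport_subset_iUnion hĝ hĝs
    (fun i : t => hUo i) ht
  let S : t → 𝓢(ℝ, ℂ) := fun i => (hψs i).toSchwartzMap (hψ i)
  let k : t → 𝓢(ℝ, ℂ) := fun i => 𝓕⁻ (S i)
  have hg_eq : g = ∑ i, ⇑(k i) := by
    calc g = 𝓕⁻ (𝓕 g) :=
          (hgc.fourierInv_fourier_eq hg (hĝ.continuous.integrable_of_hasCompactSupport hĝs)).symm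
      _ = 𝓕⁻ ⇑(∑ i, S i) := by rw [hsum]; congr; ext; simp [S, Finset.sum_apply]
      _ = ∑ i, ⇑(k i) := by
          rw [← SchwartzMap.fourierInv_coe, fourierInv_sum]; ext; simp [k, Finset.sum_apply]
  rw [hg_eq, mconv_finsetSum _ (fun i _ => (k i).integrable) hφ hC]
  have hpiece : ∀ i, Tendsto (mconv volume (k i) φ) l (𝓝 0) := fun i => by
    refine hconv i volume _ (k i).integrable ?_
    have hFk : 𝓕 ⇑(k i) = ψ i := by
      rw [← SchwartzMap.fourier_coe, FourierTransform.fourier_fourierInv_eq]; rfl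
    rw [tsupport_mFT_volume, hFk]
    intro x hx
    simpa only [U, mem_preimage, mul_inv_cancel_left₀ two_pi_pos.ne'] using hψU i hx
  rw [Finset.sum_fn]
  simpa using tendsto_finsetSum Finset.univ fun i _ => hpiece i

def dilate (N : ℝ) (k : ℝ → ℂ) (τ : ℝ) : ℂ := N * k (N * τ)

theorem integral_mul_dilate {N : ℝ} (hN : 0 < N) (h k : ℝ → ℂ) :
    ∫ τ, h τ * dilate N k τ = ∫ u, h (u / N) * k u := by
  set F : ℝ → ℂ := fun u => h (u / N) * k u
  have hF : ∀ τ, h τ * dilate N k τ = N • F (N * τ) := fun τ => by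
    simp only [F, dilate, mul_div_cancel_left₀ _ hN.ne', Complex.real_smul]
    ring
  simp_rw [hF]
  rw [integral_smul, Measure.integral_comp_mul_left F, abs_inv, abs_of_pos hN, smul_smul,
    mul_inv_cancel₀ hN.ne', one_smul]

theorem fourier_dilate {N : ℝ} (hN : 0 < N) (k : ℝ → ℂ) :
    𝓕 (dilate N k) = fun ξ => 𝓕 k (N⁻¹ * ξ) := by
  ext ξ
  simp_rw [Real.fourier_real_eq_integral_exp_smul, smul_eq_mul]
  rw [integral_mul_dilate hN (fun v => Complex.exp (↑(-2 * π * v * ξ) * Complex.I))]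
  congr 1
  ext u
  congr 4
  field_simp

theorem norm_sub_mconv_dilate_le {φ : ℝ → ℂ} (hφ : Continuous φ) {C : ℝ} (hC : ∀ t, ‖φ t‖ ≤ C)
    {δ η : ℝ} (hη : 0 ≤ η) (hδ : ∀ a b, |a - b| < δ → ‖φ a - φ b‖ ≤ η)
    {k : ℝ → ℂ} (hk : Integrable k) (hk1 : ∫ u, k u = 1) {N : ℝ} (hN : 0 < N) (t : ℝ) :
    ‖φ t - mconv volume (dilate N k) φ t‖ ≤
      η * (∫ u, ‖k u‖) + 2 * C * ∫ u in {u | N * δ ≤ |u|}, ‖k u‖ := by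
  set T := {u : ℝ | N * δ ≤ |u|}
  have hT : MeasurableSet T := measurableSet_le measurable_const continuous_abs.measurable
  have hint : Integrable fun u => φ (t - u / N) * k u :=
    hk.bdd_mul (by fun_prop : Continuous fun u => φ (t - u / N)).aestronglyMeasurable
      (ae_of_all _ fun u => hC _)
  have hdiff : φ t - mconv volume (dilate N k) φ t = ∫ u, (φ t - φ (t - u / N)) * k u := by
    simp_rw [mconv, integral_mul_dilate hN, sub_mul]
    rw [integral_sub (hk.const_mul _) hint, integral_const_mul, hk1, mul_one]
  have hpt : ∀ u, ‖(φ t - φ (t - u / N)) * k u‖ ≤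
      η * ‖k u‖ + T.indicator (fun u => 2 * C * ‖k u‖) u := by
    intro u
    rw [norm_mul]
    by_cases hu : u ∈ T
    · rw [indicator_of_mem hu]
      have : ‖φ t - φ (t - u / N)‖ ≤ 2 * C := by
        linarith [norm_sub_le (φ t) (φ (t - u / N)), hC t, hC (t - u / N)]
      nlinarith [norm_nonneg (k u)]
    · rw [indicator_of_notMem hu, add_zero]
      refine mul_le_mul_of_nonneg_right (hδ _ _ ?_) (norm_nonneg _)
      rw [sub_sub_cancel, abs_div, abs_of_pos hN, div_lt_iff₀ hN, mul_comm]
      exact not_le.1 hu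
  calc ‖φ t - mconv volume (dilate N k) φ t‖
      ≤ ∫ u, ‖(φ t - φ (t - u / N)) * k u‖ := hdiff ▸ norm_integral_le_integral_norm _
    _ ≤ ∫ u, η * ‖k u‖ + T.indicator (fun u => 2 * C * ‖k u‖) u :=
        integral_mono_of_nonneg (ae_of_all _ fun _ => norm_nonneg _)
          ((hk.norm.const_mul _).add ((hk.norm.const_mul _).indicator hT)) (ae_of_all _ hpt)
    _ = η * (∫ u, ‖k u‖) + 2 * C * ∫ u in T, ‖k u‖ := by
        rw [integral_add (hk.norm.const_mul _) ((hk.norm.const_mul _).indicator hT),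
          integral_const_mul, integral_indicator hT, integral_const_mul]

theorem tendstoUniformly_mconv_dilate {φ : ℝ → ℂ} (hφ : UniformContinuous φ) {C : ℝ}
    (hC : ∀ t, ‖φ t‖ ≤ C) {k : ℝ → ℂ} (hk : Integrable k) (hk1 : ∫ u, k u = 1) :
    TendstoUniformly (fun N => mconv volume (dilate N k) φ) φ atTop := by
  rw [Metric.tendstoUniformly_iff]
  intro ε hε
  obtain ⟨η, hη, hηA⟩ : ∃ η > 0, η * (∫ u, ‖k u‖) ≤ ε / 2 := by
    have hA : 0 ≤ ∫ u, ‖k u‖ := integral_nonneg fun _ => norm_nonneg _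
    refine ⟨ε / (2 * ((∫ u, ‖k u‖) + 1)), by positivity, ?_⟩
    rw [div_mul_eq_mul_div, div_le_div_iff₀ (by positivity) two_pos]
    nlinarith
  obtain ⟨δ, hδ, hφδ⟩ := Metric.uniformContinuous_iff.1 hφ η hη
  have hδη : ∀ a b, |a - b| < δ → ‖φ a - φ b‖ ≤ η := fun a b hab =>
    (dist_eq_norm (φ a) (φ b) ▸ hφδ (a := a) (b := b) (Real.dist_eq a b ▸ hab)).le
  have htail : Tendsto (fun N => 2 * C * ∫ u in {u | N * δ ≤ |u|}, ‖k u‖) atTop (𝓝 0) := by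
    simpa using ((tendsto_setIntegral_le_abs_atTop hk.norm).comp
      (tendsto_id.atTop_mul_const hδ)).const_mul (2 * C)
  filter_upwards [htail.eventually (gt_mem_nhds (half_pos hε)), eventually_gt_atTop 0]
    with N hNtail hN t
  rw [dist_eq_norm]
  calc ‖φ t - mconv volume (dilate N k) φ t‖
      ≤ η * (∫ u, ‖k u‖) + 2 * C * ∫ u in {u | N * δ ≤ |u|}, ‖k u‖ :=
        norm_sub_mconv_dilate_le hφ.continuous hC hη.le hδη hk hk1 hN t
    _ < ε / 2 + ε / 2 := add_lt_add_of_le_of_lt hηA hNtail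
    _ = ε := add_halves ε

theorem stmt_11_general (φ : ℝ → ℂ) (hφu : UniformContinuous φ) (hφb : ∃ C, ∀ t, ‖φ t‖ ≤ C)
    (l : Filter ℝ)
    (hsing : ∀ x : ℝ, NotSingAt l φ x) :
    Tendsto φ l (𝓝 0) := by
  obtain ⟨C, hC⟩ := hφb
  obtain ⟨S, hSs, hS0⟩ := exists_schwartzMap_hasCompactSupport_apply_eq_one (0 : ℝ)
  set k : 𝓢(ℝ, ℂ) := 𝓕⁻ S
  have hFk : 𝓕 ⇑k = ⇑S := by rw [← SchwartzMap.fourier_coe, FourierTransform.fourier_fourierInv_eq]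
  have hk1 : ∫ u, k u = 1 := by
    rw [← hS0, ← hFk, Real.fourier_real_eq_integral_exp_smul]
    simp
  refine (tendstoUniformly_mconv_dilate hφu hC k.integrable hk1).tendsto_of_eventually_tendsto
    ?_ tendsto_const_nhds
  filter_upwards [eventually_gt_atTop 0] with N hN
  have hFkN : 𝓕 (dilate N k) = ⇑S ∘ Homeomorph.mulLeft₀ N⁻¹ (inv_ne_zero hN.ne') := by
    rw [fourier_dilate hN, hFk]; rfl
  refine tendsto_mconv_of_hasCompactSupport_fourier hφu.continuous hC hsing
    ((k.integrable.comp_mul_left' hN.ne').const_mul _) (by unfold dilate; fun_prop) ?_ ?_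
  · rw [hFkN]
    exact (S.smooth ⊤).comp (contDiff_const.mul contDiff_id)
  · rw [hFkN]
    exact hSs.comp_homeomorph _

/-- If `sing supp^⋆(φ̂) = ∅` for a bounded uniformly continuous
`φ : ℝ → ℂ`, then `φ(t) → 0` as `t → ⋆∞`. -/
theorem stmt_11 (φ : ℝ → ℂ) (hφu : UniformContinuous φ) (hφb : ∃ C, ∀ t, ‖φ t‖ ≤ C)
    (l : Filter ℝ) (hl : l = atTop ∨ l = atBot)
    (hsing : ∀ x : ℝ, NotSingAt l φ x) :
    Tendsto φ l (𝓝 0) :=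
  stmt_11_general φ hφu hφb l hsing
end
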